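/- Every spherical occlusion diagram has at least one clockwise swirl and at least one counterclockwise swirl. -/
import Mathlib


open scoped RealInnerProductSpace

noncomputable section

/-- Points of `ℝ³`. -/
abbrev V3 : Type := EuclideanSpace ℝ (Fin 3)

/-- The unit sphere in `ℝ³`. -/
def unitSphere : Set V3 := Metric.sphere 0 1

/-- A geodesic arc on the unit sphere: the shortest spherical path between two
distinct, non-antipodal unit vectors.  Such an arc is automatically strictly
shorter than a great semicircle. -/
structure Arc : Type where
  p : V3
  q : V3
  hp : ‖p‖ = 1
  hq : ‖q‖ = 1
  hne : p ≠ q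
  hnantip : p ≠ -q

noncomputable instance : DecidableEq Arc := Classical.decEq _

namespace Arc

/-- The set of points of an arc: normalized nonnegative combinations of the
two endpoints. -/
def carrier (a : Arc) : Set V3 :=
  {x | ∃ s t : ℝ, 0 ≤ s ∧ 0 ≤ t ∧ (s ≠ 0 ∨ t ≠ 0) ∧
    x = ‖s • a.p + t • a.q‖⁻¹ • (s • a.p + t • a.q)}

/-- The two endpoints of an arc. -/
def endpoints (a : Arc) : Set V3 := {a.p, a.q}

/-- The relative interior of an arc: the arc minus its endpoints. -/
def interior (a : Arc) : Set V3 := a.carrier \ a.endpoints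

/-- The great circle containing an arc. -/
def greatCircle (a : Arc) : Set V3 := (Submodule.span ℝ {a.p, a.q} : Set V3) ∩ unitSphere

/-- Two arcs are collinear if they lie on the same great circle. -/
def Collinear (a b : Arc) : Prop := a.greatCircle = b.greatCircle

/-- `a` hits `b` at `x`: `x` is an endpoint of `a` lying in the relative
interior of `b`, and the two arcs are not collinear. -/
def HitsAt (a b : Arc) (x : V3) : Prop :=
  ¬ Collinear a b ∧ x ∈ a.endpoints ∧ x ∈ b.interior

/-- `a` hits (feeds into) `b`; equivalently, `b` blocks `a`. -/
def Hits (a b : Arc) : Prop := ∃ x, HitsAt a b x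

/-- The endpoint of `a` other than `x`. -/
def otherEnd (a : Arc) (x : V3) : V3 :=
  haveI := Classical.decEq V3
  if x = a.p then a.q else a.p

end Arc

/-- Triple product (determinant) of three vectors in `ℝ³`; its sign records
orientation. -/
def tripod (u v w : V3) : ℝ :=
  u 0 * (v 1 * w 2 - v 2 * w 1) - u 1 * (v 0 * w 2 - v 2 * w 0)
    + u 2 * (v 0 * w 1 - v 1 * w 0)

/-- The (signed) side of the great circle of `b` on which a point `y` lies. -/
def Arc.sideOf (b : Arc) (y : V3) : ℝ := tripod b.p b.q y

/-- A Spherical Occlusion Diagram: a finite non-empty collection of geodesic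
arcs on the unit sphere satisfying axioms A1–A3. -/
structure SOD where
  arcs : Finset Arc
  nonempty : arcs.Nonempty
  /-- A1: any two arcs are internally disjoint. -/
  a1 : ∀ a ∈ arcs, ∀ b ∈ arcs, a ≠ b → Disjoint a.interior b.interior
  /-- A2: each arc is blocked by arcs of the diagram at each endpoint. -/
  a2 : ∀ a ∈ arcs, ∀ x ∈ a.endpoints, ∃ b ∈ arcs, Arc.HitsAt a b x
  /-- A3: all arcs that hit the same arc reach it from the same side. -/
  a3 : ∀ b ∈ arcs, ∀ a ∈ arcs, ∀ a' ∈ arcs, ∀ x x',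
        Arc.HitsAt a b x → Arc.HitsAt a' b x' →
        0 < Arc.sideOf b (a.otherEnd x) * Arc.sideOf b (a'.otherEnd x')

/-- The union of all arcs of an SOD. -/
def SOD.union (D : SOD) : Set V3 := ⋃ a ∈ D.arcs, a.carrier

/-- A subset of the sphere is spherically convex if together with any two
non-antipodal points it contains the geodesic arc between them. -/
def SphericallyConvex (s : Set V3) : Prop :=
  ∀ x ∈ s, ∀ y ∈ s, y ≠ -x → ∀ u v : ℝ, 0 ≤ u → 0 ≤ v → (u ≠ 0 ∨ v ≠ 0) →
    ‖u • x + v • y‖⁻¹ • (u • x + v • y) ∈ s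

/-- The tiles of an SOD: the connected components of the complement of the
union of its arcs in the unit sphere. -/
def SOD.tiles (D : SOD) : Set (Set V3) :=
  {T | ∃ p ∈ unitSphere \ D.union, T = connectedComponentIn (unitSphere \ D.union) p}

/-- A swirl of degree `k` in an SOD: a cyclic sequence of `k` distinct arcs of
the diagram, each feeding into the next (at the point `pt (i+1)`), all turning
in the same rotational direction (all clockwise or all counterclockwise, as
recorded by the sign of the orientation determinant at consecutive corners). -/
structure Swirl (D : SOD) (k : ℕ) where
  kpos : 0 < k
  arc : ZMod k → Arc
  pt : ZMod k → V3
  mem : ∀ i, arc i ∈ D.arcs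
  inj : Function.Injective arc
  hits : ∀ i, Arc.HitsAt (arc i) (arc (i + 1)) (pt (i + 1))
  dir : (∀ i, tripod (pt i) (pt (i + 1)) (pt (i + 2)) < 0) ∨
        (∀ i, 0 < tripod (pt i) (pt (i + 1)) (pt (i + 2)))

/-- A clockwise swirl. -/
def Swirl.Clockwise {D : SOD} {k : ℕ} (S : Swirl D k) : Prop :=
  ∀ i, tripod (S.pt i) (S.pt (i + 1)) (S.pt (i + 2)) < 0

/-- A counterclockwise swirl. -/
def Swirl.Counterclockwise {D : SOD} {k : ℕ} (S : Swirl D k) : Prop :=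
  ∀ i, 0 < tripod (S.pt i) (S.pt (i + 1)) (S.pt (i + 2))

/-- Two swirls are equal as cyclic sequences of arcs. -/
def Swirl.CyclicEq {D : SOD} {k₁ k₂ : ℕ} (S₁ : Swirl D k₁) (S₂ : Swirl D k₂) : Prop :=
  k₁ = k₂ ∧ ∃ j : ℕ, ∀ i : ℕ, S₁.arc ((i + j : ℕ) : ZMod k₁) = S₂.arc ((i : ℕ) : ZMod k₂)

/-- The union of the arcs of a swirl. -/
def Swirl.carrier {D : SOD} {k : ℕ} (S : Swirl D k) : Set V3 := ⋃ i, (S.arc i).carrier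

/-- `E` is the eye of the swirl `S`: the spherically convex one among the two
connected regions into which the arcs of `S` divide the unit sphere. -/
def Swirl.IsEyeOf {D : SOD} {k : ℕ} (E : Set V3) (S : Swirl D k) : Prop :=
  SphericallyConvex E ∧
    ∃ p ∈ unitSphere \ S.carrier, E = connectedComponentIn (unitSphere \ S.carrier) p

/-- The set of arcs of an SOD blocked by the arc `b`. -/
def SOD.blockedBy (D : SOD) (b : Arc) : Set Arc := {a | a ∈ D.arcs ∧ a.Hits b}

/-- An SOD is swirling if each of its arcs is part of two (distinct) swirls. -/
def SOD.Swirling (D : SOD) : Prop :=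
  ∀ a ∈ D.arcs, ∃ (k₁ k₂ : ℕ) (S₁ : Swirl D k₁) (S₂ : Swirl D k₂),
    (∃ i, S₁.arc i = a) ∧ (∃ i, S₂.arc i = a) ∧ ¬ S₁.CyclicEq S₂


/-! ### Auxiliary development -/

section Aux

lemma tripod_rot (u v y : V3) : tripod u v y = tripod y u v := by
  simp only [tripod]; ring

lemma tripod_rot' (u v y : V3) : tripod u v y = tripod v y u := by
  simp only [tripod]; ring

lemma tripod_self23 (w y : V3) : tripod w y y = 0 := by
  simp only [tripod]; ring

lemma tripod_expandA (c s t : ℝ) (u v y : V3) :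
    tripod (c • (s • u + t • v)) u y = (c * t) * tripod v u y := by
  simp only [tripod, PiLp.smul_apply, PiLp.add_apply, smul_eq_mul]; ring

lemma tripod_expandB (c s t : ℝ) (u v y : V3) :
    tripod (c • (s • u + t • v)) v y = (c * s) * tripod u v y := by
  simp only [tripod, PiLp.smul_apply, PiLp.add_apply, smul_eq_mul]; ring

lemma tripod_expand2A (c s t : ℝ) (w u v : V3) :
    tripod w (c • (s • u + t • v)) u = -((c * t) * tripod w u v) := by
  simp only [tripod, PiLp.smul_apply, PiLp.add_apply, smul_eq_mul]; ring

lemma tripod_expand2B (c s t : ℝ) (w u v : V3) :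
    tripod w (c • (s • u + t • v)) v = (c * s) * tripod w u v := by
  simp only [tripod, PiLp.smul_apply, PiLp.add_apply, smul_eq_mul]; ring

lemma tripod_expand3 (c s t : ℝ) (w x u v : V3) :
    tripod w x (c • (s • u + t • v)) = (c * s) * tripod w x u + (c * t) * tripod w x v := by
  simp only [tripod, PiLp.smul_apply, PiLp.add_apply, smul_eq_mul]; ring

namespace Arc

lemma linIndep (a : Arc) : LinearIndependent ℝ ![a.p, a.q] := by
  rw [linearIndependent_fin2]
  constructor
  · intro h
    have := a.hq
    rw [show (![a.p, a.q] : Fin 2 → V3) 1 = a.q from rfl] at h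
    rw [h] at this
    simp at this
  · intro c h
    rw [show (![a.p, a.q] : Fin 2 → V3) 1 = a.q from rfl,
        show (![a.p, a.q] : Fin 2 → V3) 0 = a.p from rfl] at h
    have hc : |c| = 1 := by
      have := congrArg norm h
      rw [norm_smul, a.hq, a.hp] at this
      simpa using this
    rcases abs_eq (by norm_num : (0:ℝ) ≤ 1) |>.mp hc with hc1 | hc1
    · rw [hc1, one_smul] at h; exact a.hne h.symm
    · rw [hc1] at h
      apply a.hnantip
      rw [← h]; simp
end Arc
namespace Arc

lemma combo_eq_zero (a : Arc) {s t : ℝ} (h : s • a.p + t • a.q = 0) : s = 0 ∧ t = 0 := by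
  have hli := a.linIndep
  rw [Fintype.linearIndependent_iff] at hli
  have := hli ![s, t] (by simpa [Fin.sum_univ_two] using h)
  exact ⟨this 0, this 1⟩

lemma combo_ne_zero (a : Arc) {s t : ℝ} (hst : s ≠ 0 ∨ t ≠ 0) : s • a.p + t • a.q ≠ 0 := by
  intro h
  obtain ⟨h1, h2⟩ := a.combo_eq_zero h
  tauto

lemma combo_norm_pos (a : Arc) {s t : ℝ} (hst : s ≠ 0 ∨ t ≠ 0) : 0 < ‖s • a.p + t • a.q‖ :=
  norm_pos_iff.mpr (a.combo_ne_zero hst)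

lemma norm_of_mem_carrier {a : Arc} {x : V3} (h : x ∈ a.carrier) : ‖x‖ = 1 := by
  obtain ⟨s, t, hs, ht, hst, rfl⟩ := h
  have hN := a.combo_norm_pos hst
  rw [norm_smul, norm_inv, norm_norm]
  field_simp

lemma p_mem_carrier (a : Arc) : a.p ∈ a.carrier := by
  refine ⟨1, 0, by norm_num, le_refl 0, Or.inl one_ne_zero, ?_⟩
  simp [a.hp]

lemma q_mem_carrier (a : Arc) : a.q ∈ a.carrier := by
  refine ⟨0, 1, le_refl 0, by norm_num, Or.inr one_ne_zero, ?_⟩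
  simp [a.hq]

lemma endpoints_subset_carrier (a : Arc) : a.endpoints ⊆ a.carrier := by
  intro x hx
  rcases hx with h | h
  · rw [h]; exact a.p_mem_carrier
  · rw [Set.mem_singleton_iff] at h; rw [h]; exact a.q_mem_carrier

lemma not_antipodal {a : Arc} {x y : V3} (hx : x ∈ a.carrier) (hy : y ∈ a.carrier) :
    x ≠ -y := by
  obtain ⟨s1, t1, hs1, ht1, hst1, rfl⟩ := hx
  obtain ⟨s2, t2, hs2, ht2, hst2, rfl⟩ := hy
  intro h
  set c1 : ℝ := ‖s1 • a.p + t1 • a.q‖⁻¹ with hc1def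
  set c2 : ℝ := ‖s2 • a.p + t2 • a.q‖⁻¹ with hc2def
  have hc1 : 0 < c1 := inv_pos.mpr (a.combo_norm_pos hst1)
  have hc2 : 0 < c2 := inv_pos.mpr (a.combo_norm_pos hst2)
  have h' : (c1 * s1 + c2 * s2) • a.p + (c1 * t1 + c2 * t2) • a.q = 0 := by
    have h2 : c1 • (s1 • a.p + t1 • a.q) + c2 • (s2 • a.p + t2 • a.q) = 0 := by
      rw [h]; abel
    linear_combination (norm := module) h2
  obtain ⟨e1, e2⟩ := a.combo_eq_zero h'
  have hs10 : s1 = 0 := by nlinarith [mul_nonneg hc1.le hs1, mul_nonneg hc2.le hs2]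
  have ht10 : t1 = 0 := by nlinarith [mul_nonneg hc1.le ht1, mul_nonneg hc2.le ht2]
  tauto

end Arc
namespace Arc

lemma interior_rep {a : Arc} {x : V3} (h : x ∈ a.interior) :
    ∃ s t : ℝ, 0 < s ∧ 0 < t ∧ x = ‖s • a.p + t • a.q‖⁻¹ • (s • a.p + t • a.q) := by
  obtain ⟨⟨s, t, hs, ht, hst, rfl⟩, hne⟩ := h
  rcases eq_or_lt_of_le hs with hs0 | hs0
  · exfalso
    apply hne
    have ht0 : t ≠ 0 := by rcases hst with h | h; exacts [absurd hs0.symm h, h]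
    have ht0' : 0 < t := lt_of_le_of_ne ht (Ne.symm ht0)
    have : ‖(0:ℝ) • a.p + t • a.q‖⁻¹ • ((0:ℝ) • a.p + t • a.q) = a.q := by
      rw [zero_smul, zero_add, norm_smul, a.hq]
      simp [abs_of_pos ht0', smul_smul, inv_mul_cancel₀ (ne_of_gt ht0')]
    rw [← hs0, this]
    right; rfl
  rcases eq_or_lt_of_le ht with ht0 | ht0
  · exfalso
    apply hne
    have hs0' : 0 < s := hs0
    have : ‖s • a.p + (0:ℝ) • a.q‖⁻¹ • (s • a.p + (0:ℝ) • a.q) = a.p := by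
      rw [zero_smul, add_zero, norm_smul, a.hp]
      simp [abs_of_pos hs0', smul_smul, inv_mul_cancel₀ (ne_of_gt hs0')]
    rw [← ht0, this]
    left; rfl
  exact ⟨s, t, hs0, ht0, rfl⟩

lemma pair_eq_range (u v : V3) : ({u, v} : Set V3) = Set.range ![u, v] := by
  ext z
  simp [Fin.exists_fin_two, or_comm]

lemma finrank_span (a : Arc) :
    Module.finrank ℝ (Submodule.span ℝ ({a.p, a.q} : Set V3)) = 2 := by
  rw [pair_eq_range, finrank_span_eq_card a.linIndep]
  simp

/-- `{otherEnd, x} = {p, q}` when `x` is an endpoint. -/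
lemma otherEnd_pair {a : Arc} {x : V3} (hx : x ∈ a.endpoints) :
    ({a.otherEnd x, x} : Set V3) = {a.p, a.q} := by
  classical
  rcases hx with hx | hx
  · subst hx
    rw [otherEnd, if_pos rfl, Set.pair_comm]
  · rw [Set.mem_singleton_iff] at hx
    subst hx
    rw [otherEnd, if_neg (Ne.symm a.hne)]

lemma otherEnd_mem {a : Arc} {x : V3} (hx : x ∈ a.endpoints) :
    a.otherEnd x ∈ a.endpoints := by
  classical
  rw [otherEnd]
  split
  · right; rfl
  · left; rfl

end Arc

lemma tripod_eq_zero_imp {u v y : V3} (h : tripod u v y = 0) :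
    ∃ c0 c1 c2 : ℝ, ¬(c0 = 0 ∧ c1 = 0 ∧ c2 = 0) ∧ c0 • u + c1 • v + c2 • y = 0 := by
  classical
  set M : Matrix (Fin 3) (Fin 3) ℝ :=
    Matrix.of ![![u 0, u 1, u 2], ![v 0, v 1, v 2], ![y 0, y 1, y 2]] with hM
  have hdet : M.det = 0 := by
    rw [Matrix.det_fin_three]
    simp only [hM, Matrix.of_apply, Matrix.cons_val', Matrix.cons_val_zero, Matrix.cons_val_one,
      Matrix.head_cons, Matrix.empty_val', Matrix.cons_val_fin_one, Matrix.head_fin_const,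
      Matrix.cons_val_two, Matrix.tail_cons]
    rw [← h]; simp only [tripod]; ring
  obtain ⟨c, hc0, hc⟩ := Matrix.exists_vecMul_eq_zero_iff.mpr hdet
  refine ⟨c 0, c 1, c 2, ?_, ?_⟩
  · rintro ⟨h0, h1, h2⟩
    apply hc0
    funext i
    fin_cases i <;> assumption
  · have hj : ∀ j : Fin 3, c 0 * M 0 j + c 1 * M 1 j + c 2 * M 2 j = 0 := by
      intro j
      have := congrFun hc j
      simpa [Matrix.vecMul, dotProduct, Fin.sum_univ_three] using this
    ext i
    have h0 := hj 0
    have h1 := hj 1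
    have h2 := hj 2
    simp only [hM, Matrix.of_apply, Matrix.cons_val', Matrix.cons_val_zero, Matrix.cons_val_one,
      Matrix.head_cons, Matrix.empty_val', Matrix.cons_val_fin_one, Matrix.head_fin_const,
      Matrix.cons_val_two, Matrix.tail_cons] at h0 h1 h2
    fin_cases i <;>
      simp only [PiLp.add_apply, PiLp.smul_apply, PiLp.zero_apply, smul_eq_mul] <;>
      first | exact h0 | exact h1 | exact h2
namespace Arc

lemma otherEnd_p (a : Arc) : a.otherEnd a.p = a.q := by
  classical
  rw [otherEnd, if_pos rfl]

lemma otherEnd_q (a : Arc) : a.otherEnd a.q = a.p := by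
  classical
  rw [otherEnd, if_neg (Ne.symm a.hne)]

end Arc

/-- The two endpoints of `b` lie strictly on opposite sides of the plane spanned
by the arc `a` when `a` hits `b` at `x`. -/
lemma hits_side_lemma {a b : Arc} {x : V3} (h : Arc.HitsAt a b x) :
    tripod (a.otherEnd x) x b.p * tripod (a.otherEnd x) x b.q < 0 := by
  obtain ⟨hncol, hxa, hxb⟩ := h
  set w := a.otherEnd x with hw
  obtain ⟨s, t, hs, ht, hrep⟩ := Arc.interior_rep hxb
  set N : ℝ := ‖s • b.p + t • b.q‖ with hN
  have hNpos : 0 < N := b.combo_norm_pos (Or.inl (ne_of_gt hs))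
  have hNi : 0 < N⁻¹ := inv_pos.mpr hNpos
  set A := tripod w x b.p with hA
  set B := tripod w x b.q with hB
  have hs' : 0 < N⁻¹ * s := mul_pos hNi hs
  have ht' : 0 < N⁻¹ * t := mul_pos hNi ht
  have hrel : (N⁻¹ * s) * A + (N⁻¹ * t) * B = 0 := by
    have e := tripod_expand3 N⁻¹ s t w x b.p b.q
    rw [← hrep, tripod_self23 w x] at e
    linarith [e]
  have hBne : B ≠ 0 := by
    intro hB0
    have hA0 : A = 0 := by
      rw [hB0, mul_zero, add_zero, mul_eq_zero] at hrel
      rcases hrel with h' | h'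
      · exact absurd h' (ne_of_gt hs')
      · exact h'
    have hspan : ∀ y : V3, tripod w x y = 0 →
        y ∈ Submodule.span ℝ ({a.p, a.q} : Set V3) := by
      intro y hy
      obtain ⟨c0, c1, c2, hcne, hcomb⟩ := tripod_eq_zero_imp hy
      rw [← Arc.otherEnd_pair hxa, ← hw]
      by_cases hc2 : c2 = 0
      · exfalso
        rw [hc2, zero_smul, add_zero] at hcomb
        apply hcne
        rcases hxa with hxp | hxq
        · rw [hxp, hw, hxp, a.otherEnd_p] at hcomb
          have : c1 • a.p + c0 • a.q = 0 := by rw [← hcomb]; abel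
          obtain ⟨e1, e0⟩ := a.combo_eq_zero this
          exact ⟨e0, e1, hc2⟩
        · rw [Set.mem_singleton_iff] at hxq
          rw [hxq, hw, hxq, a.otherEnd_q] at hcomb
          obtain ⟨e0, e1⟩ := a.combo_eq_zero hcomb
          exact ⟨e0, e1, hc2⟩
      · rw [Submodule.mem_span_pair]
        refine ⟨-(c2⁻¹ * c0), -(c2⁻¹ * c1), ?_⟩
        have hy2 : c2 • y = -(c0 • w) - c1 • x := by
          have h4 := eq_neg_of_add_eq_zero_right hcomb
          rw [h4]; abel
        have : c2⁻¹ • (c2 • y) = c2⁻¹ • (-(c0 • w) - c1 • x) := by rw [hy2]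
        rw [smul_smul, inv_mul_cancel₀ hc2, one_smul] at this
        rw [this, smul_sub, smul_neg, smul_smul, smul_smul]
        module
    have hbp : b.p ∈ Submodule.span ℝ ({a.p, a.q} : Set V3) := hspan b.p hA0
    have hbq : b.q ∈ Submodule.span ℝ ({a.p, a.q} : Set V3) := hspan b.q hB0
    have hle : Submodule.span ℝ ({b.p, b.q} : Set V3) ≤
        Submodule.span ℝ ({a.p, a.q} : Set V3) := by
      rw [Submodule.span_le]
      intro z hz
      rcases hz with rfl | hz
      · exact hbp
      · rw [Set.mem_singleton_iff] at hz; subst hz; exact hbq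
    have heq : Submodule.span ℝ ({b.p, b.q} : Set V3) =
        Submodule.span ℝ ({a.p, a.q} : Set V3) :=
      Submodule.eq_of_le_of_finrank_le hle (by rw [a.finrank_span, b.finrank_span])
    apply hncol
    show a.greatCircle = b.greatCircle
    unfold Arc.greatCircle
    rw [heq]
  have key : (N⁻¹ * s) * (A * B) = -((N⁻¹ * t) * (B * B)) := by
    linear_combination B * hrel
  have hBB : 0 < B * B := mul_self_pos.mpr hBne
  nlinarith [mul_pos ht' hBB]

lemma exists_next {a b : Arc} {x : V3} (h : Arc.HitsAt a b x) {ε : ℝ}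
    (hε : ε = 1 ∨ ε = -1) :
    ∃ y ∈ b.endpoints, 0 < ε * tripod (a.otherEnd x) x y := by
  have hside := hits_side_lemma h
  have hbp : b.p ∈ b.endpoints := Or.inl rfl
  have hbq : b.q ∈ b.endpoints := Or.inr rfl
  rcases mul_neg_iff.mp hside with ⟨hP, hQ⟩ | ⟨hP, hQ⟩ <;> rcases hε with rfl | rfl
  · exact ⟨b.p, hbp, by linarith⟩
  · exact ⟨b.q, hbq, by linarith⟩
  · exact ⟨b.q, hbq, by linarith⟩
  · exact ⟨b.p, hbp, by linarith⟩

lemma interior_tripod {a : Arc} {z x : V3} (hz : z ∈ a.interior) (hx : x ∈ a.endpoints) :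
    ∃ c : ℝ, 0 < c ∧ ∀ y, tripod z x y = c * tripod (a.otherEnd x) x y := by
  obtain ⟨s, t, hs, ht, hrep⟩ := Arc.interior_rep hz
  set N : ℝ := ‖s • a.p + t • a.q‖ with hN
  have hNpos : 0 < N := a.combo_norm_pos (Or.inl (ne_of_gt hs))
  have hNi : 0 < N⁻¹ := inv_pos.mpr hNpos
  rcases hx with hxp | hxq
  · subst hxp
    refine ⟨N⁻¹ * t, mul_pos hNi ht, fun y => ?_⟩
    rw [a.otherEnd_p, hrep, tripod_expandA]
  · rw [Set.mem_singleton_iff] at hxq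
    subst hxq
    refine ⟨N⁻¹ * s, mul_pos hNi hs, fun y => ?_⟩
    rw [a.otherEnd_q, hrep, tripod_expandB]
/-- Sign characterisation of the chosen next endpoint. -/
lemma sign_next {b : Arc} {w z y : V3} {ε : ℝ} (hz : z ∈ b.interior)
    (hy : y ∈ b.endpoints) (hpos : 0 < ε * tripod w z y) :
    (y = b.q ∧ 0 < ε * Arc.sideOf b w) ∨ (y = b.p ∧ ε * Arc.sideOf b w < 0) := by
  obtain ⟨s, t, hs, ht, hrep⟩ := Arc.interior_rep hz
  have hNi : 0 < ‖s • b.p + t • b.q‖⁻¹ :=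
    inv_pos.mpr (b.combo_norm_pos (Or.inl (ne_of_gt hs)))
  have r : tripod w b.p b.q = Arc.sideOf b w := by
    rw [Arc.sideOf, tripod_rot' w b.p b.q]
  rcases hy with hu | hu
  · right
    refine ⟨hu, ?_⟩
    have e := tripod_expand2A ‖s • b.p + t • b.q‖⁻¹ s t w b.p b.q
    rw [← hrep, r] at e
    rw [hu, e] at hpos
    nlinarith [mul_pos hNi ht]
  · left
    rw [Set.mem_singleton_iff] at hu
    refine ⟨hu, ?_⟩
    have e := tripod_expand2B ‖s • b.p + t • b.q‖⁻¹ s t w b.p b.q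
    rw [← hrep, r] at e
    rw [hu, e] at hpos
    nlinarith [mul_pos hNi hs]

/-- All arcs hitting `b` continue (with turning direction `ε`) towards the same
endpoint of `b`.  This uses axiom A3. -/
lemma unique_next (D : SOD) {ε : ℝ} (hε : ε = 1 ∨ ε = -1) {b a a' : Arc}
    (hb : b ∈ D.arcs) (ha : a ∈ D.arcs) (ha' : a' ∈ D.arcs) {z z' y y' : V3}
    (h : Arc.HitsAt a b z) (h' : Arc.HitsAt a' b z')
    (hy : y ∈ b.endpoints) (hy' : y' ∈ b.endpoints)
    (hp : 0 < ε * tripod (a.otherEnd z) z y) (hp' : 0 < ε * tripod (a'.otherEnd z') z' y') :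
    y = y' := by
  have hεsq : ε * ε = 1 := by rcases hε with rfl | rfl <;> norm_num
  have hσ := D.a3 b hb a ha a' ha' z z' h h'
  have H := sign_next h.2.2 hy hp
  have H' := sign_next h'.2.2 hy' hp'
  rcases H with ⟨rfl, hd⟩ | ⟨rfl, hd⟩ <;> rcases H' with ⟨rfl, hd'⟩ | ⟨rfl, hd'⟩
  · rfl
  · exfalso; nlinarith
  · exfalso; nlinarith
  · rfl
/-- Main construction: every SOD has a swirl turning in the prescribed
direction `ε`. -/
theorem exists_directed_swirl (D : SOD) {ε : ℝ} (hε : ε = 1 ∨ ε = -1) :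
    ∃ k, ∃ S : Swirl D k, ∀ i, 0 < ε * tripod (S.pt i) (S.pt (i + 1)) (S.pt (i + 2)) := by
  classical
  -- the finite state space: an arc together with an endpoint (direction of travel)
  let St := {s : Arc × V3 // s.1 ∈ D.arcs ∧ s.2 ∈ s.1.endpoints}
  haveI : Finite St := by
    have hinj : Function.Injective (fun s : St =>
        ((⟨s.1.1, s.2.1⟩ : {a : Arc // a ∈ D.arcs}),
          (if s.1.2 = s.1.1.p then true else false))) := by
      rintro ⟨⟨a, x⟩, ha, hx⟩ ⟨⟨a', x'⟩, ha', hx'⟩ hss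
      simp only [Prod.mk.injEq, Subtype.mk.injEq] at hss
      obtain ⟨haa, hbb⟩ := hss
      subst haa
      suffices hxx : x = x' by subst hxx; rfl
      by_cases h1 : x = a.p
      · by_cases h2 : x' = a.p
        · rw [h1, h2]
        · rw [if_pos h1, if_neg h2] at hbb; simp at hbb
      · by_cases h2 : x' = a.p
        · rw [if_neg h1, if_pos h2] at hbb; simp at hbb
        · rcases hx with hxp | hxq
          · exact absurd hxp h1
          · rcases hx' with hxp' | hxq'
            · exact absurd hxp' h2
            · rw [Set.mem_singleton_iff] at hxq hxq'
              exact hxq.trans hxq'.symm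
    exact Finite.of_injective _ hinj
  -- the step function
  have hstepex : ∀ s : St, ∃ s' : St,
      Arc.HitsAt s.1.1 s'.1.1 s.1.2 ∧
      0 < ε * tripod (s.1.1.otherEnd s.1.2) s.1.2 s'.1.2 := by
    rintro ⟨⟨a, x⟩, ha, hx⟩
    obtain ⟨b, hb, hab⟩ := D.a2 a ha x hx
    obtain ⟨y, hy, hy2⟩ := exists_next hab hε
    exact ⟨⟨(b, y), hb, hy⟩, hab, hy2⟩
  choose step hstep1 hstep2 using hstepex
  -- two consecutive steps turn in direction ε
  have h2step : ∀ s : St, 0 < ε * tripod s.1.2 (step s).1.2 (step (step s)).1.2 := by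
    intro s
    obtain ⟨c, hc, hcy⟩ := interior_tripod (hstep1 s).2.2 (step s).2.2
    rw [hcy]
    nlinarith [hstep2 (step s)]
  -- same arc forces same exit point (uniqueness of turning direction, A3)
  have same_arc : ∀ s s' : St, (step s).1.1 = (step s').1.1 →
      (step s).1.2 = (step s').1.2 := by
    intro s s' hA
    have h1 := hstep1 s
    have h2 := hstep1 s'
    rw [← hA] at h2
    have he2 := (step s').2.2
    rw [← hA] at he2
    exact unique_next D hε (step s).2.1 s.2.1 s'.2.1 h1 h2 (step s).2.2 he2
      (hstep2 s) (hstep2 s')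
  -- start the walk
  obtain ⟨a0, ha0⟩ := D.nonempty
  let s0 : St := ⟨(a0, a0.p), ha0, Or.inl rfl⟩
  let u : ℕ → St := fun n => step^[n] s0
  have hu1 : ∀ n, u (n + 1) = step (u n) := fun n => Function.iterate_succ_apply' step n s0
  have huadd : ∀ m j, u (m + j) = step^[j] (u m) := by
    intro m j
    show step^[m + j] s0 = _
    rw [Nat.add_comm, Function.iterate_add_apply]
  -- pigeonhole: the walk repeats
  obtain ⟨m1, n1, hmn1, hum⟩ := Finite.exists_ne_map_eq_of_infinite u
  obtain ⟨m, n, hltmn, humn⟩ : ∃ m n, m < n ∧ u m = u n := by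
    rcases lt_or_gt_of_ne hmn1 with h | h
    · exact ⟨m1, n1, h, hum⟩
    · exact ⟨n1, m1, h, hum.symm⟩
  have hKex : ∃ d, 0 < d ∧ u (m + d) = u m := by
    refine ⟨n - m, by omega, ?_⟩
    rw [show m + (n - m) = n by omega]
    exact humn.symm
  set k := Nat.find hKex with hkdef
  have hk := Nat.find_spec hKex
  have hkpos : 0 < k := hk.1
  have hkmin : ∀ d, d < k → ¬(0 < d ∧ u (m + d) = u m) := fun d hd => Nat.find_min hKex hd
  -- the periodic tail
  let w : ℕ → St := fun j => u (m + j)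
  have hw1 : ∀ j, w (j + 1) = step (w j) := by
    intro j
    show u (m + j + 1) = step (u (m + j))
    exact hu1 (m + j)
  have hwadd : ∀ t j, w (t + j) = step^[j] (w t) := by
    intro t j
    show u (m + (t + j)) = step^[j] (u (m + t))
    rw [← Nat.add_assoc]
    exact huadd (m + t) j
  have hwk : w k = w 0 := by
    show u (m + k) = u (m + 0)
    rw [Nat.add_zero]; exact hk.2
  have hwper : ∀ j, w (j + k) = w j := by
    intro j
    calc w (j + k) = step^[j] (w k) := by rw [Nat.add_comm]; exact hwadd k j
    _ = step^[j] (w 0) := by rw [hwk]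
    _ = w j := by rw [← hwadd 0 j, Nat.zero_add]
  have haux : ∀ (c t : ℕ), w (t + k * c) = w t := by
    intro c
    induction c with
    | zero => intro t; rw [Nat.mul_zero, Nat.add_zero]
    | succ c ih =>
      intro t
      rw [show t + k * (c + 1) = (t + k * c) + k by ring, hwper, ih]
  have hwmod : ∀ j, w (j % k) = w j := by
    intro j
    have := haux (j / k) (j % k)
    rw [Nat.mod_add_div] at this
    exact this.symm
  haveI : NeZero k := ⟨Nat.pos_iff_ne_zero.mp hkpos⟩
  let v : ZMod k → St := fun i => w i.val
  have hvnat : ∀ j : ℕ, v (j : ZMod k) = w j := by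
    intro j
    show w ((j : ZMod k)).val = w j
    rw [ZMod.val_natCast]
    exact hwmod j
  have hvs : ∀ i : ZMod k, v (i + 1) = step (v i) := by
    intro i
    have hi : ((i.val : ℕ) : ZMod k) = i := ZMod.natCast_rightInverse i
    calc v (i + 1) = v (((i.val + 1 : ℕ) : ZMod k)) := by
          rw [Nat.cast_add, Nat.cast_one, hi]
    _ = w (i.val + 1) := hvnat _
    _ = step (w i.val) := hw1 _
    _ = step (v i) := rfl
  have hvinj : Function.Injective v := by
    have key : ∀ i j : ZMod k, i.val < j.val → w i.val ≠ w j.val := by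
      intro i j hij hww
      have hjk : j.val < k := ZMod.val_lt j
      have hd : u (m + (i.val + (k - j.val))) = u m := by
        have e1 : w (i.val + (k - j.val)) = step^[k - j.val] (w i.val) := hwadd _ _
        have e2 : w (j.val + (k - j.val)) = step^[k - j.val] (w j.val) := hwadd _ _
        rw [show j.val + (k - j.val) = k by omega, hwk] at e2
        show w (i.val + (k - j.val)) = w 0
        rw [e1, hww, ← e2]
      exact hkmin (i.val + (k - j.val)) (by omega) ⟨by omega, hd⟩
    intro i j hij
    by_contra hne
    rcases Nat.lt_trichotomy i.val j.val with h | h | h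
    · exact key i j h hij
    · exact hne (ZMod.val_injective k h)
    · exact key j i h hij.symm
  have hvi : ∀ i : ZMod k, v i = step (v (i - 1)) := by
    intro i
    have h := hvs (i - 1)
    rwa [show i - 1 + 1 = i by ring] at h
  have hdir : ∀ i : ZMod k,
      0 < ε * tripod ((v (i - 1)).1.2) ((v (i + 1 - 1)).1.2) ((v (i + 2 - 1)).1.2) := by
    intro i
    rw [show i + 1 - 1 = i by ring, show i + 2 - 1 = i + 1 by ring, hvs i, hvi i]
    exact h2step (v (i - 1))
  refine ⟨k, ⟨hkpos, fun i => (v i).1.1, fun i => (v (i - 1)).1.2,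
    fun i => (v i).2.1, ?_, ?_, ?_⟩, ?_⟩
  · -- injectivity of the arcs
    intro i j hij
    simp only at hij
    have harc : (step (v (i - 1))).1.1 = (step (v (j - 1))).1.1 := by
      rw [← hvi i, ← hvi j]; exact hij
    have hpt := same_arc _ _ harc
    have hvv : v i = v j := by
      rw [hvi i, hvi j]
      exact Subtype.ext (Prod.ext harc hpt)
    exact hvinj hvv
  · -- the chain of hits
    intro i
    show Arc.HitsAt ((v i).1.1) ((v (i + 1)).1.1) ((v (i + 1 - 1)).1.2)
    rw [show i + 1 - 1 = i by ring, hvs i]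
    exact hstep1 (v i)
  · -- all turns in the same direction
    rcases hε with rfl | rfl
    · right; intro i; have := hdir i; linarith
    · left; intro i; have := hdir i; linarith
  · intro i
    exact hdir i

/-- Every spherical occlusion diagram has at least one clockwise
swirl and at least one counterclockwise swirl. -/
theorem stmt_14 (D : SOD) :
    (∃ k, ∃ S : Swirl D k, S.Clockwise) ∧
    (∃ k, ∃ S : Swirl D k, S.Counterclockwise) := by
  constructor
  · obtain ⟨k, S, hS⟩ := exists_directed_swirl D (Or.inr rfl : (-1:ℝ) = 1 ∨ (-1:ℝ) = -1)
    exact ⟨k, S, fun i => by have := hS i; linarith⟩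
  · obtain ⟨k, S, hS⟩ := exists_directed_swirl D (Or.inl rfl : (1:ℝ) = 1 ∨ (1:ℝ) = -1)
    exact ⟨k, S, fun i => by have := hS i; linarith⟩
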